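/- arXiv:1207.5841 — 6 statements merged into one kernel-verified Lean document; each statement's English description precedes it below -/
import Mathlib

section
/- A modal formula is derivable in the system S4.2 if and only if it is valid on every finite pre-Boolean algebra frame. -/
/-- Modal formulas: falsum, propositional variables, implication, Box. -/
inductive ModalFormula : Type
  | falsum : ModalFormula
  | var : ℕ → ModalFormula
  | impl : ModalFormula → ModalFormula → ModalFormula
  | box : ModalFormula → ModalFormula

namespace ModalFormula

/-- Negation: ¬φ := φ → ⊥. -/
def neg (φ : ModalFormula) : ModalFormula := impl φ falsum

/-- Disjunction: φ ∨ ψ := ¬φ → ψ. -/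
def disj (φ ψ : ModalFormula) : ModalFormula := impl (neg φ) ψ

/-- Conjunction: φ ∧ ψ := ¬(φ → ¬ψ). -/
def conj (φ ψ : ModalFormula) : ModalFormula := neg (impl φ (neg ψ))

/-- Diamond: ◇φ := ¬□¬φ. -/
def dia (φ : ModalFormula) : ModalFormula := neg (box (neg φ))

end ModalFormula

/-- A Kripke model: worlds, accessibility relation, valuation. -/
structure KripkeModel where
  W : Type
  R : W → W → Prop
  V : W → ℕ → Prop

/-- Truth of a modal formula at a world of a Kripke model. -/
def KripkeModel.truth (M : KripkeModel) : M.W → ModalFormula → Prop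
  | _, ModalFormula.falsum => False
  | w, ModalFormula.var n => M.V w n
  | w, ModalFormula.impl φ ψ => M.truth w φ → M.truth w ψ
  | w, ModalFormula.box φ => ∀ v, M.R w v → M.truth v φ

/-- A formula is valid on a frame (W, R) if it is true at every world of
every Kripke model with that frame. -/
def ValidOnFrame (W : Type) (R : W → W → Prop) (φ : ModalFormula) : Prop :=
  ∀ V : W → ℕ → Prop, ∀ w : W, KripkeModel.truth ⟨W, R, V⟩ w φ

/-- φ is a substitution instance of a classical propositional tautology:
it is true under every assignment of truth values to formulas that respects
falsum and implication (variables and boxed formulas may get arbitrary values). -/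
def TautInstance (φ : ModalFormula) : Prop :=
  ∀ v : ModalFormula → Prop,
    (¬ v ModalFormula.falsum) →
    (∀ a b : ModalFormula, v (ModalFormula.impl a b) ↔ (v a → v b)) →
    v φ

/-- Derivability from a set of axioms `Ax`: the smallest set of formulas
containing all substitution instances of propositional tautologies and all
formulas in `Ax`, closed under modus ponens and necessitation. -/
inductive Derivable (Ax : ModalFormula → Prop) : ModalFormula → Prop
  | taut (φ : ModalFormula) : TautInstance φ → Derivable Ax φ
  | ax (φ : ModalFormula) : Ax φ → Derivable Ax φ
  | mp (φ ψ : ModalFormula) :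
      Derivable Ax (ModalFormula.impl φ ψ) → Derivable Ax φ → Derivable Ax ψ
  | nec (φ : ModalFormula) : Derivable Ax φ → Derivable Ax (ModalFormula.box φ)

/-- Scheme K: □(φ → ψ) → (□φ → □ψ). -/
def AxK (χ : ModalFormula) : Prop :=
  ∃ φ ψ : ModalFormula,
    χ = ModalFormula.impl (ModalFormula.box (ModalFormula.impl φ ψ))
          (ModalFormula.impl (ModalFormula.box φ) (ModalFormula.box ψ))

/-- Scheme T: □φ → φ. -/
def AxT (χ : ModalFormula) : Prop :=
  ∃ φ : ModalFormula, χ = ModalFormula.impl (ModalFormula.box φ) φ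

/-- Scheme 4: □φ → □□φ. -/
def Ax4 (χ : ModalFormula) : Prop :=
  ∃ φ : ModalFormula,
    χ = ModalFormula.impl (ModalFormula.box φ) (ModalFormula.box (ModalFormula.box φ))

/-- Scheme .2: ◇□φ → □◇φ. -/
def AxDot2 (χ : ModalFormula) : Prop :=
  ∃ φ : ModalFormula,
    χ = ModalFormula.impl (ModalFormula.dia (ModalFormula.box φ))
          (ModalFormula.box (ModalFormula.dia φ))

/-- Scheme .3: (◇φ ∧ ◇ψ) → ◇[(φ ∧ ◇ψ) ∨ (ψ ∧ ◇φ)]. -/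
def AxDot3 (χ : ModalFormula) : Prop :=
  ∃ φ ψ : ModalFormula,
    χ = ModalFormula.impl
          (ModalFormula.conj (ModalFormula.dia φ) (ModalFormula.dia ψ))
          (ModalFormula.dia
            (ModalFormula.disj (ModalFormula.conj φ (ModalFormula.dia ψ))
              (ModalFormula.conj ψ (ModalFormula.dia φ))))

/-- Scheme 5: ◇□φ → φ. -/
def Ax5 (χ : ModalFormula) : Prop :=
  ∃ φ : ModalFormula,
    χ = ModalFormula.impl (ModalFormula.dia (ModalFormula.box φ)) φ

/-- Axioms of S4: K + T + 4. -/
def S4Ax (χ : ModalFormula) : Prop := AxK χ ∨ AxT χ ∨ Ax4 χ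

/-- Axioms of S4.2: S4 + .2. -/
def S42Ax (χ : ModalFormula) : Prop := S4Ax χ ∨ AxDot2 χ

/-- Axioms of S4.3: S4 + .3. -/
def S43Ax (χ : ModalFormula) : Prop := S4Ax χ ∨ AxDot3 χ

/-- Axioms of S5: S4 + 5. -/
def S5Ax (χ : ModalFormula) : Prop := S4Ax χ ∨ Ax5 χ

/-- A finite pre-Boolean algebra frame: a finite set `W` with a reflexive
transitive relation `R` such that for some finite set `A` there is a map `f`
from `W` onto the full powerset of `A` with `R w v ↔ f w ⊆ f v`. -/
def IsPreBooleanAlgebraFrame (W : Type) (R : W → W → Prop) : Prop :=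
  Finite W ∧ (∀ w, R w w) ∧ (∀ w v u, R w v → R v u → R w u) ∧
    ∃ (A : Type) (_ : Finite A) (f : W → Set A),
      Function.Surjective f ∧ ∀ w v, R w v ↔ f w ⊆ f v

/-!
Soundness: a pre-Boolean algebra frame is reflexive, transitive and directed (two worlds lie
below any world labelled by the union of their labels), and such frames validate T, 4 and .2.

Completeness: if `φ` is not a theorem, it fails at the root of the transitive filtration,
through the subformulas of `φ`, of the canonical model generated by a maximal consistent set
containing `¬φ`. This is a finite preorder with a least element, and it also has a greatest
element: by .2 the canonical frame is convergent, so its finitely many worlds have a common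
successor. A finite preorder `α` with `⊥` and `⊤` is the image of the pre-Boolean algebra frame
`Set α × α` (ordered by inclusion of first coordinates) under a surjective bounded morphism:
send `(X, u)` to a greatest element of `X ∪ {⊥}` if that is a chain and to `⊤` otherwise,
replaced by `u` when `u` lies in the same cluster. Bounded morphisms preserve truth, so `φ` also
fails on a finite pre-Boolean algebra frame.
-/

open ModalFormula Set

namespace ModalFormula

def subformulas : ModalFormula → Set ModalFormula
  | falsum => {falsum}
  | var n => {var n}
  | impl a b => insert (impl a b) (subformulas a ∪ subformulas b)
  | box a => insert (box a) (subformulas a)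

theorem finite_subformulas (φ : ModalFormula) : (subformulas φ).Finite := by
  induction φ with
  | falsum | var _ => exact finite_singleton _
  | impl _ _ ha hb => exact (ha.union hb).insert _
  | box _ ha => exact ha.insert _

theorem mem_subformulas_self (φ : ModalFormula) : φ ∈ subformulas φ := by
  cases φ <;> simp [subformulas]

end ModalFormula

structure IsValuation (v : ModalFormula → Prop) : Prop where
  not_falsum : ¬ v falsum
  impl_iff : ∀ a b, v (impl a b) ↔ (v a → v b)

namespace IsValuation

variable {v : ModalFormula → Prop}

theorem neg_iff (hv : IsValuation v) (a : ModalFormula) : v (neg a) ↔ ¬ v a := by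
  simp only [neg, hv.impl_iff, hv.not_falsum, imp_false]

theorem foldr_impl_iff (hv : IsValuation v) (L : List ModalFormula) (ψ : ModalFormula) :
    v (L.foldr impl ψ) ↔ ((∀ χ ∈ L, v χ) → v ψ) := by
  induction L with
  | nil => simp
  | cons a l ih => simp [hv.impl_iff, ih, and_imp]

end IsValuation

theorem Derivable.of_valuation {Ax : ModalFormula → Prop} {φ : ModalFormula}
    (h : ∀ v, IsValuation v → v φ) : Derivable Ax φ :=
  .taut φ fun v h₁ h₂ => h v ⟨h₁, h₂⟩

theorem derivable_neg_neg_impl {Ax : ModalFormula → Prop} (a : ModalFormula) :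
    Derivable Ax (impl (neg (neg a)) a) :=
  .of_valuation fun v hv => by simp [hv.impl_iff, hv.neg_iff]

namespace KripkeModel

variable (M : KripkeModel)

theorem isValuation_truth (w : M.W) : IsValuation (M.truth w) where
  not_falsum := id
  impl_iff _ _ := .rfl

theorem truth_dia {w : M.W} {a : ModalFormula} :
    M.truth w (dia a) ↔ ∃ v, M.R w v ∧ M.truth v a := by
  simp [dia, neg, truth]

end KripkeModel

structure IsBoundedMorphism {W W' : Type} (R : W → W → Prop) (R' : W' → W' → Prop)
    (f : W → W') : Prop where
  map_rel : ∀ {w v}, R w v → R' (f w) (f v)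
  exists_rel_of_rel : ∀ {w v'}, R' (f w) v' → ∃ v, R w v ∧ f v = v'

theorem IsBoundedMorphism.truth_iff {W W' : Type} {R : W → W → Prop} {R' : W' → W' → Prop}
    {f : W → W'} (hf : IsBoundedMorphism R R' f) (V : W' → ℕ → Prop) (ψ : ModalFormula)
    (w : W) :
    KripkeModel.truth ⟨W, R, fun w => V (f w)⟩ w ψ ↔ KripkeModel.truth ⟨W', R', V⟩ (f w) ψ := by
  induction ψ generalizing w with
  | falsum | var _ => rfl
  | impl a b iha ihb => exact imp_congr (iha w) (ihb w)
  | box a iha =>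
    refine ⟨fun h v' hv' => ?_, fun h v hv => (iha v).2 (h _ (hf.map_rel hv))⟩
    obtain ⟨v, hv, rfl⟩ := hf.exists_rel_of_rel hv'
    exact (iha v).1 (h v hv)

theorem ValidOnFrame.of_isBoundedMorphism {W W' : Type} {R : W → W → Prop} {R' : W' → W' → Prop}
    {f : W → W'} {φ : ModalFormula} (hφ : ValidOnFrame W R φ) (hf : IsBoundedMorphism R R' f)
    (hsurj : Function.Surjective f) : ValidOnFrame W' R' φ := by
  intro V w'
  obtain ⟨w, rfl⟩ := hsurj w'
  exact (hf.truth_iff V φ w).1 (hφ _ w)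

section Soundness

variable {W : Type} {R : W → W → Prop}

theorem ValidOnFrame.of_S42Ax (hrefl : ∀ w, R w w) (htrans : ∀ w v u, R w v → R v u → R w u)
    (hconv : ∀ w u v, R w u → R w v → ∃ z, R u z ∧ R v z) {φ : ModalFormula} (h : S42Ax φ) :
    ValidOnFrame W R φ := by
  intro V w
  rcases h with (⟨a, b, rfl⟩ | ⟨a, rfl⟩ | ⟨a, rfl⟩) | ⟨a, rfl⟩
  · exact fun hab ha v hv => hab v hv (ha v hv)
  · exact fun ha => ha w (hrefl w)
  · exact fun ha v hv u hu => ha u (htrans _ _ _ hv hu)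
  · simp only [KripkeModel.truth, KripkeModel.truth_dia]
    rintro ⟨v, hwv, hv⟩ u hwu
    obtain ⟨z, hvz, huz⟩ := hconv w v u hwv hwu
    exact ⟨z, huz, hv z hvz⟩

theorem ValidOnFrame.of_derivable (hrefl : ∀ w, R w w) (htrans : ∀ w v u, R w v → R v u → R w u)
    (hconv : ∀ w u v, R w u → R w v → ∃ z, R u z ∧ R v z) {φ : ModalFormula}
    (h : Derivable S42Ax φ) : ValidOnFrame W R φ := by
  induction h with
  | taut ψ hψ =>
    intro V w
    exact hψ _ (KripkeModel.isValuation_truth ⟨W, R, V⟩ w).not_falsum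
      (KripkeModel.isValuation_truth ⟨W, R, V⟩ w).impl_iff
  | ax ψ hψ => exact .of_S42Ax hrefl htrans hconv hψ
  | mp _ _ _ _ ihab iha => exact fun V w => ihab V w (iha V w)
  | nec _ _ ih => exact fun V _ v _ => ih V v

end Soundness

theorem IsPreBooleanAlgebraFrame.directed {W : Type} {R : W → W → Prop}
    (hF : IsPreBooleanAlgebraFrame W R) (u v : W) : ∃ z, R u z ∧ R v z := by
  obtain ⟨-, -, -, A, -, f, hsurj, hR⟩ := hF
  obtain ⟨z, hz⟩ := hsurj (f u ∪ f v)
  exact ⟨z, (hR u z).2 (hz ▸ subset_union_left), (hR v z).2 (hz ▸ subset_union_right)⟩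

theorem IsChain.exists_isGreatest {α : Type*} [Preorder α] {s : Set α}
    (hs : IsChain (· ≤ ·) s) (hfin : s.Finite) (hne : s.Nonempty) : ∃ m, IsGreatest s m := by
  obtain ⟨m, hm⟩ := hfin.exists_maximal hne
  refine ⟨m, hm.1, fun a ha => ?_⟩
  obtain rfl | hne := eq_or_ne a m
  · exact le_rfl
  · exact (hs ha hm.1 hne).elim id fun h => hm.2 ha h

section PreBooleanCover

variable {α : Type} [Preorder α] [Finite α] {r t u : α} {X Y : Set α}

open Classical in
noncomputable def chainSup (r t : α) (X : Set α) : α :=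
  if h : IsChain (· ≤ ·) (insert r X) then
    (h.exists_isGreatest (toFinite _) (insert_nonempty r X)).choose
  else t

theorem isGreatest_chainSup (h : IsChain (· ≤ ·) (insert r X)) :
    IsGreatest (insert r X) (chainSup r t X) := by
  rw [chainSup, dif_pos h]
  exact (h.exists_isGreatest (toFinite _) (insert_nonempty r X)).choose_spec

theorem chainSup_of_not_isChain (h : ¬ IsChain (· ≤ ·) (insert r X)) : chainSup r t X = t :=
  dif_neg h

theorem le_chainSup (ht : IsTop t) (hu : u ∈ X) : u ≤ chainSup r t X := by
  by_cases h : IsChain (· ≤ ·) (insert r X)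
  · exact (isGreatest_chainSup h).2 (mem_insert_of_mem r hu)
  · exact chainSup_of_not_isChain h ▸ ht u

theorem chainSup_empty : chainSup r t ∅ = r := by
  have h : IsChain (· ≤ ·) (insert r (∅ : Set α)) := by simp
  simpa using (isGreatest_chainSup (t := t) h).1

theorem chainSup_mono (hr : IsBot r) (ht : IsTop t) (hXY : X ⊆ Y) :
    chainSup r t X ≤ chainSup r t Y := by
  by_cases hY : IsChain (· ≤ ·) (insert r Y)
  · rcases (isGreatest_chainSup (t := t) (hY.mono (insert_subset_insert hXY))).1 with hX | hX
    · rw [hX]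
      exact hr _
    · exact le_chainSup ht (hXY hX)
  · exact chainSup_of_not_isChain hY ▸ ht _

theorem chainSup_insert_le (hr : IsBot r) (ht : IsTop t) (hu : chainSup r t X ≤ u) :
    chainSup r t (insert u X) ≤ u := by
  by_cases hX : IsChain (· ≤ ·) (insert r X)
  · have hle : ∀ a ∈ insert r X, a ≤ u := fun a ha =>
      ((isGreatest_chainSup (t := t) hX).2 ha).trans hu
    have hchain : IsChain (· ≤ ·) (insert r (insert u X)) := by
      rw [insert_comm]
      exact hX.insert fun a ha _ => .inr (hle a ha)
    rcases (isGreatest_chainSup (t := t) hchain).1 with h | h | h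
    · rw [h]
      exact hr u
    · exact h.le
    · exact hle _ (mem_insert_of_mem r h)
  · exact (ht _).trans (chainSup_of_not_isChain (t := t) hX ▸ hu)

open Classical in
noncomputable def coverMap (r t : α) (p : Set α × α) : α :=
  if AntisymmRel (· ≤ ·) p.2 (chainSup r t p.1) then p.2 else chainSup r t p.1

theorem antisymmRel_coverMap (p : Set α × α) :
    AntisymmRel (· ≤ ·) (coverMap r t p) (chainSup r t p.1) := by
  unfold coverMap
  split_ifs with h
  · exact h
  · exact .refl _ _

theorem isBoundedMorphism_coverMap (hr : IsBot r) (ht : IsTop t) :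
    IsBoundedMorphism (fun p q : Set α × α => p.1 ⊆ q.1) (· ≤ ·) (coverMap r t) where
  map_rel {p q} hpq := (antisymmRel_coverMap p).le.trans <|
    (chainSup_mono hr ht hpq).trans (antisymmRel_coverMap q).ge
  exists_rel_of_rel {p u} hpu := by
    refine ⟨(insert u p.1, u), subset_insert u p.1, if_pos ⟨le_chainSup ht (mem_insert u p.1), ?_⟩⟩
    exact chainSup_insert_le hr ht ((antisymmRel_coverMap p).ge.trans hpu)

theorem surjective_coverMap (hr : IsBot r) (ht : IsTop t) :
    Function.Surjective (coverMap r t) := by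
  intro u
  have hle : coverMap r t (∅, r) ≤ u := calc
    coverMap r t (∅, r) ≤ chainSup r t ∅ := (antisymmRel_coverMap _).le
    _ = r := chainSup_empty
    _ ≤ u := hr u
  obtain ⟨q, -, hq⟩ := (isBoundedMorphism_coverMap hr ht).exists_rel_of_rel hle
  exact ⟨q, hq⟩

end PreBooleanCover

theorem isPreBooleanAlgebraFrame_prod (α : Type) [Finite α] [Nonempty α] :
    IsPreBooleanAlgebraFrame (Set α × α) (fun p q => p.1 ⊆ q.1) :=
  ⟨inferInstance, fun _ => subset_rfl, fun _ _ _ => subset_trans,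
    ⟨α, inferInstance, Prod.fst, fun X => ⟨(X, Classical.arbitrary α), rfl⟩, fun _ _ => .rfl⟩⟩

theorem ValidOnFrame.of_isBot_of_isTop {α : Type} [Preorder α] [Finite α] {r t : α}
    (hr : IsBot r) (ht : IsTop t) {φ : ModalFormula}
    (hφ : ∀ W R, IsPreBooleanAlgebraFrame W R → ValidOnFrame W R φ) :
    ValidOnFrame α (· ≤ ·) φ :=
  have : Nonempty α := ⟨r⟩
  (hφ _ _ (isPreBooleanAlgebraFrame_prod α)).of_isBoundedMorphism
    (isBoundedMorphism_coverMap hr ht) (surjective_coverMap hr ht)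

def Entails (Ax : ModalFormula → Prop) (Γ : Set ModalFormula) (ψ : ModalFormula) : Prop :=
  ∃ L : List ModalFormula, (∀ χ ∈ L, χ ∈ Γ) ∧ Derivable Ax (L.foldr impl ψ)

def Consistent (Ax : ModalFormula → Prop) (Γ : Set ModalFormula) : Prop := ¬ Entails Ax Γ falsum

def MaximalConsistent (Ax : ModalFormula → Prop) (Γ : Set ModalFormula) : Prop :=
  Maximal (Consistent Ax) Γ

def CanonicalRel (Γ Δ : Set ModalFormula) : Prop := box ⁻¹' Γ ⊆ Δ

section Deduction

variable {Ax : ModalFormula → Prop} {Γ Δ Θ : Set ModalFormula} {a b ψ : ModalFormula}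

namespace Entails

theorem of_derivable (h : Derivable Ax ψ) : Entails Ax Γ ψ := ⟨[], by simp, h⟩

theorem of_mem (h : ψ ∈ Γ) : Entails Ax Γ ψ :=
  ⟨[ψ], by simpa using h, .of_valuation fun v hv => by simp [hv.impl_iff]⟩

theorem mp (hab : Entails Ax Γ (impl a b)) (ha : Entails Ax Γ a) : Entails Ax Γ b := by
  obtain ⟨L₁, hL₁, hd₁⟩ := hab
  obtain ⟨L₂, hL₂, hd₂⟩ := ha
  refine ⟨L₁ ++ L₂, by simpa [or_imp, forall_and] using ⟨hL₁, hL₂⟩, .mp _ _ (.mp _ _ ?_ hd₁) hd₂⟩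
  refine .of_valuation fun v hv => ?_
  simp only [hv.impl_iff, hv.foldr_impl_iff, List.mem_append]
  exact fun h₁ h₂ h => h₁ (fun χ hχ => h χ (.inl hχ)) (h₂ fun χ hχ => h χ (.inr hχ))

theorem of_derivable_impl (hd : Derivable Ax (impl a b)) (ha : Entails Ax Γ a) : Entails Ax Γ b :=
  (of_derivable hd).mp ha

open Classical in
theorem deduction (h : Entails Ax (insert a Γ) b) : Entails Ax Γ (impl a b) := by
  obtain ⟨L, hL, hd⟩ := h
  refine ⟨L.filter (· ≠ a), fun χ hχ => ?_, .mp _ _ (.of_valuation fun v hv => ?_) hd⟩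
  · simp only [List.mem_filter, decide_eq_true_eq] at hχ
    exact (hL χ hχ.1).resolve_left hχ.2
  · simp only [hv.impl_iff, hv.foldr_impl_iff, List.mem_filter, decide_eq_true_eq]
    intro h hL ha
    exact h fun χ hχ => if hχa : χ = a then hχa ▸ ha else hL χ ⟨hχ, hχa⟩

open Classical in
theorem exists_of_union (h : Entails Ax (Γ ∪ Δ) ψ) :
    ∃ a, Entails Ax Γ a ∧ Entails Ax Δ (impl a ψ) := by
  obtain ⟨L, hL, hd⟩ := h
  refine ⟨(L.filter (· ∉ Γ)).foldr impl ψ, ⟨L.filter (· ∈ Γ), by simp, .mp _ _ ?_ hd⟩,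
    ⟨L.filter (· ∉ Γ), fun χ hχ => ?_, .of_valuation fun v hv => ?_⟩⟩
  · refine .of_valuation fun v hv => ?_
    simp only [hv.impl_iff, hv.foldr_impl_iff, List.mem_filter, decide_eq_true_eq]
    exact fun h h₁ h₂ => h fun χ hχ => if hχΓ : χ ∈ Γ then h₁ χ ⟨hχ, hχΓ⟩ else h₂ χ ⟨hχ, hχΓ⟩
  · simp only [List.mem_filter, decide_eq_true_eq] at hχ
    exact (hL χ hχ.1).resolve_left hχ.2
  · simp only [hv.impl_iff, hv.foldr_impl_iff]
    exact fun h₁ h₂ => h₂ h₁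

end Entails

theorem Consistent.exists_maximalConsistent_superset (h : Consistent Ax Γ) :
    ∃ Δ, Γ ⊆ Δ ∧ MaximalConsistent Ax Δ := by
  refine zorn_subset_nonempty {Δ | Consistent Ax Δ}
    (fun c hc hchain hne => ⟨⋃₀ c, ?_, fun _ => subset_sUnion_of_mem⟩) Γ h
  rintro ⟨L, hL, hd⟩
  obtain ⟨t, htc, hLt⟩ :=
    hchain.directedOn.exists_mem_subset_of_finite_of_subset_sUnion hne L.finite_toSet hL
  exact hc htc ⟨L, hLt, hd⟩

theorem consistent_neg_of_not_derivable (h : ¬ Derivable Ax ψ) : Consistent Ax {neg ψ} := by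
  intro hcon
  rw [← insert_empty_eq] at hcon
  obtain ⟨L, hL, hd⟩ := hcon.deduction
  obtain rfl : L = [] := List.eq_nil_iff_forall_not_mem.2 hL
  exact h (.mp _ _ (derivable_neg_neg_impl ψ) hd)

namespace MaximalConsistent

theorem entails_neg_of_not_mem (hΓ : MaximalConsistent Ax Γ) (ha : a ∉ Γ) : Entails Ax Γ (neg a) :=
  Entails.deduction <| not_not.1 fun hcon => ha (hΓ.2 hcon (subset_insert a Γ) (mem_insert a Γ))

theorem mem_of_entails (hΓ : MaximalConsistent Ax Γ) (h : Entails Ax Γ ψ) : ψ ∈ Γ :=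
  by_contra fun hψ => hΓ.1 ((hΓ.entails_neg_of_not_mem hψ).mp h)

theorem mem_of_derivable_impl (hΓ : MaximalConsistent Ax Γ) (hd : Derivable Ax (impl a b))
    (ha : a ∈ Γ) : b ∈ Γ :=
  hΓ.mem_of_entails (.of_derivable_impl hd (.of_mem ha))

theorem neg_mem_iff (hΓ : MaximalConsistent Ax Γ) : neg a ∈ Γ ↔ a ∉ Γ :=
  ⟨fun hna ha => hΓ.1 ((Entails.of_mem hna).mp (.of_mem ha)),
    fun ha => hΓ.mem_of_entails (hΓ.entails_neg_of_not_mem ha)⟩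

theorem isValuation (hΓ : MaximalConsistent Ax Γ) : IsValuation (· ∈ Γ) where
  not_falsum h := hΓ.1 (.of_mem h)
  impl_iff a b := by
    refine ⟨fun hab ha => hΓ.mem_of_entails ((Entails.of_mem hab).mp (.of_mem ha)), fun h => ?_⟩
    by_cases ha : a ∈ Γ
    · refine hΓ.mem_of_derivable_impl (.of_valuation fun v hv => ?_) (h ha)
      simp only [hv.impl_iff]
      tauto
    · refine hΓ.mem_of_derivable_impl (.of_valuation fun v hv => ?_) (hΓ.neg_mem_iff.2 ha)
      simp only [hv.impl_iff, hv.neg_iff]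
      tauto

end MaximalConsistent

theorem derivable_axK (a b : ModalFormula) :
    Derivable S42Ax (impl (box (impl a b)) (impl (box a) (box b))) :=
  .ax _ (.inl (.inl ⟨a, b, rfl⟩))

theorem derivable_axT (a : ModalFormula) : Derivable S42Ax (impl (box a) a) :=
  .ax _ (.inl (.inr (.inl ⟨a, rfl⟩)))

theorem derivable_ax4 (a : ModalFormula) : Derivable S42Ax (impl (box a) (box (box a))) :=
  .ax _ (.inl (.inr (.inr ⟨a, rfl⟩)))

theorem derivable_axDot2 (a : ModalFormula) :
    Derivable S42Ax (impl (dia (box a)) (box (dia a))) :=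
  .ax _ (.inr ⟨a, rfl⟩)

theorem Entails.box_of_box_foldr_impl {L : List ModalFormula} (hL : ∀ χ ∈ L, box χ ∈ Γ)
    (h : Entails S42Ax Γ (box (L.foldr impl ψ))) : Entails S42Ax Γ (box ψ) := by
  induction L with
  | nil => exact h
  | cons χ L ih =>
    refine ih (fun χ' hχ' => hL χ' (List.mem_cons_of_mem χ hχ')) ?_
    exact (of_derivable_impl (derivable_axK _ _) h).mp (.of_mem (hL χ List.mem_cons_self))

theorem Entails.box : Entails S42Ax (box ⁻¹' Γ) ψ → Entails S42Ax Γ (box ψ)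
  | ⟨_, hL, hd⟩ => box_of_box_foldr_impl hL (.of_derivable (.nec _ hd))

namespace MaximalConsistent

theorem canonicalRel_refl (hΓ : MaximalConsistent S42Ax Γ) : CanonicalRel Γ Γ :=
  fun a h => hΓ.mem_of_derivable_impl (derivable_axT a) h

theorem box_mem_of_canonicalRel (hΓ : MaximalConsistent S42Ax Γ) (hR : CanonicalRel Γ Δ)
    (h : box a ∈ Γ) : box a ∈ Δ :=
  hR (hΓ.mem_of_derivable_impl (derivable_ax4 a) h)

theorem canonicalRel_trans (hΓ : MaximalConsistent S42Ax Γ) (hΓΔ : CanonicalRel Γ Δ)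
    (hΔΘ : CanonicalRel Δ Θ) : CanonicalRel Γ Θ :=
  fun _ h => hΔΘ (hΓ.box_mem_of_canonicalRel hΓΔ h)

theorem exists_canonicalRel_not_mem (hΓ : MaximalConsistent S42Ax Γ) (h : box a ∉ Γ) :
    ∃ Δ, MaximalConsistent S42Ax Δ ∧ CanonicalRel Γ Δ ∧ a ∉ Δ := by
  have hcon : Consistent S42Ax (insert (neg a) (box ⁻¹' Γ)) := fun hcon =>
    h (hΓ.mem_of_entails (Entails.of_derivable_impl (derivable_neg_neg_impl a) hcon.deduction).box)
  obtain ⟨Δ, hsub, hΔ⟩ := hcon.exists_maximalConsistent_superset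
  exact ⟨Δ, hΔ, (subset_insert _ _).trans hsub, hΔ.neg_mem_iff.1 (hsub (mem_insert _ _))⟩

theorem dia_mem_of_canonicalRel (hΓ : MaximalConsistent S42Ax Γ)
    (hΔ : MaximalConsistent S42Ax Δ) (hR : CanonicalRel Γ Δ) (ha : a ∈ Δ) : dia a ∈ Γ :=
  hΓ.neg_mem_iff.2 fun h => hΔ.neg_mem_iff.1 (hR h) ha

theorem exists_common_successor (hΓ : MaximalConsistent S42Ax Γ)
    (hΔ : MaximalConsistent S42Ax Δ) (hΘ : MaximalConsistent S42Ax Θ)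
    (hΓΔ : CanonicalRel Γ Δ) (hΓΘ : CanonicalRel Γ Θ) :
    ∃ Λ, MaximalConsistent S42Ax Λ ∧ CanonicalRel Δ Λ ∧ CanonicalRel Θ Λ := by
  have hcon : Consistent S42Ax (box ⁻¹' Δ ∪ box ⁻¹' Θ) := fun hcon => by
    obtain ⟨a, ha, hna⟩ := hcon.exists_of_union
    have hbox : box a ∈ Δ := hΔ.mem_of_entails ha.box
    have hboxneg : box (neg a) ∈ Θ := hΘ.mem_of_entails hna.box
    have hdia : dia a ∈ Θ := hΓΘ (hΓ.mem_of_derivable_impl (derivable_axDot2 a)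
      (hΓ.dia_mem_of_canonicalRel hΔ hΓΔ hbox))
    exact hΘ.neg_mem_iff.1 hdia hboxneg
  obtain ⟨Λ, hsub, hΛ⟩ := hcon.exists_maximalConsistent_superset
  exact ⟨Λ, hΛ, subset_union_left.trans hsub, subset_union_right.trans hsub⟩

theorem exists_common_successor_of_finite (hΓ : MaximalConsistent S42Ax Γ)
    {S : Set (Set ModalFormula)} (hS : S.Finite)
    (hSΓ : ∀ Δ ∈ S, MaximalConsistent S42Ax Δ ∧ CanonicalRel Γ Δ) :
    ∃ Θ, MaximalConsistent S42Ax Θ ∧ CanonicalRel Γ Θ ∧ ∀ Δ ∈ S, CanonicalRel Δ Θ := by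
  induction S, hS using Set.Finite.induction_on with
  | empty => exact ⟨Γ, hΓ, hΓ.canonicalRel_refl, by simp⟩
  | @insert Δ S _ _ ih =>
    obtain ⟨Θ, hΘ, hΓΘ, hub⟩ := ih fun Δ' h => hSΓ Δ' (mem_insert_of_mem _ h)
    obtain ⟨hΔ, hΓΔ⟩ := hSΓ Δ (mem_insert _ _)
    obtain ⟨Λ, hΛ, hΘΛ, hΔΛ⟩ := hΓ.exists_common_successor hΘ hΔ hΓΘ hΓΔ
    refine ⟨Λ, hΛ, hΓ.canonicalRel_trans hΓΘ hΘΛ, ?_⟩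
    rintro Δ' (rfl | hΔ')
    · exact hΔΛ
    · exact (hSΓ Δ' (mem_insert_of_mem _ hΔ')).1.canonicalRel_trans (hub Δ' hΔ') hΘΛ

end MaximalConsistent

end Deduction

/-- The transitive filtration through `Φ` of the canonical model generated by `Γ₀`. -/
def Filtration (Φ Γ₀ : Set ModalFormula) : Type :=
  {S : Set ModalFormula // ∃ Δ, MaximalConsistent S42Ax Δ ∧ CanonicalRel Γ₀ Δ ∧ S = Δ ∩ Φ}

namespace Filtration

variable {Φ Γ₀ Δ : Set ModalFormula}

instance : Preorder (Filtration Φ Γ₀) where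
  le x y := ∀ ψ, box ψ ∈ x.1 → box ψ ∈ y.1
  le_refl _ _ := id
  le_trans _ _ _ hxy hyz ψ h := hyz ψ (hxy ψ h)

def of (hΔ : MaximalConsistent S42Ax Δ) (hR : CanonicalRel Γ₀ Δ) : Filtration Φ Γ₀ :=
  ⟨Δ ∩ Φ, Δ, hΔ, hR, rfl⟩

def model (Φ Γ₀ : Set ModalFormula) : KripkeModel :=
  ⟨Filtration Φ Γ₀, (· ≤ ·), fun x n => var n ∈ x.1⟩

theorem finite (hΦ : Φ.Finite) : Finite (Filtration Φ Γ₀) := by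
  have := hΦ.powerset.to_subtype
  have hsub (x : Filtration Φ Γ₀) : x.1 ∈ 𝒫 Φ := by
    obtain ⟨Δ, -, -, hx⟩ := x.2
    exact hx ▸ inter_subset_right
  exact Finite.of_injective (fun x => (⟨x.1, hsub x⟩ : 𝒫 Φ)) fun x y h =>
    Subtype.ext (by simpa using congrArg Subtype.val h)

theorem isBot_of (hΓ₀ : MaximalConsistent S42Ax Γ₀) :
    IsBot (of hΓ₀ hΓ₀.canonicalRel_refl : Filtration Φ Γ₀) := by
  intro y ψ hψ
  obtain ⟨Δ, -, hR, hy⟩ := y.2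
  rw [hy]
  exact ⟨hΓ₀.box_mem_of_canonicalRel hR hψ.1, hψ.2⟩

theorem exists_isTop (hΓ₀ : MaximalConsistent S42Ax Γ₀) (hΦ : Φ.Finite) :
    ∃ t : Filtration Φ Γ₀, IsTop t := by
  have := finite (Γ₀ := Γ₀) hΦ
  choose Δ hΔ hR hx using fun x : Filtration Φ Γ₀ => x.2
  obtain ⟨Θ, hΘ, hΓ₀Θ, hub⟩ := hΓ₀.exists_common_successor_of_finite (finite_range Δ)
    (by rintro _ ⟨x, rfl⟩; exact ⟨hΔ x, hR x⟩)
  refine ⟨of hΘ hΓ₀Θ, fun x ψ hψ => ?_⟩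
  rw [hx x] at hψ
  exact ⟨(hΔ x).box_mem_of_canonicalRel (hub _ ⟨x, rfl⟩) hψ.1, hψ.2⟩

theorem truth_iff_mem (hΓ₀ : MaximalConsistent S42Ax Γ₀) {ψ : ModalFormula}
    (hψ : subformulas ψ ⊆ Φ) (x : Filtration Φ Γ₀) : (model Φ Γ₀).truth x ψ ↔ ψ ∈ x.1 := by
  induction ψ generalizing x with
  | falsum =>
    obtain ⟨Δ, hΔ, -, hx⟩ := x.2
    simp only [KripkeModel.truth, hx, false_iff]
    exact fun h => hΔ.isValuation.not_falsum h.1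
  | var n => rfl
  | impl a b iha ihb =>
    simp only [subformulas, insert_subset_iff, union_subset_iff] at hψ
    obtain ⟨Δ, hΔ, -, hx⟩ := x.2
    simp only [KripkeModel.truth, iha hψ.2.1 x, ihb hψ.2.2 x, hx, mem_inter_iff,
      hΔ.isValuation.impl_iff, hψ.1, hψ.2.1 (mem_subformulas_self a),
      hψ.2.2 (mem_subformulas_self b), and_true]
  | box a iha =>
    simp only [subformulas, insert_subset_iff] at hψ
    constructor
    · intro h
      by_contra hna
      obtain ⟨Δ, hΔ, hR, hx⟩ := x.2
      obtain ⟨Δ', hΔ', hΔΔ', ha⟩ := hΔ.exists_canonicalRel_not_mem fun h' => hna (hx ▸ ⟨h', hψ.1⟩)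
      have hxy : x ≤ of hΔ' (hΓ₀.canonicalRel_trans hR hΔΔ') := fun χ hχ => by
        rw [hx] at hχ
        exact ⟨hΔ.box_mem_of_canonicalRel hΔΔ' hχ.1, hχ.2⟩
      exact ha ((iha hψ.2 _).1 (h _ hxy)).1
    · intro h y hxy
      obtain ⟨Δ, hΔ, -, hy⟩ := y.2
      have hay := hxy a h
      rw [hy] at hay
      refine (iha hψ.2 y).2 ?_
      rw [hy]
      exact ⟨hΔ.mem_of_derivable_impl (derivable_axT a) hay.1, hψ.2 (mem_subformulas_self a)⟩

end Filtration

/-- S4.2 is characterized by the class of finite pre-Boolean algebra frames: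
a modal formula is derivable in S4.2 iff it is valid on every finite
pre-Boolean algebra frame. -/
theorem S42_characterized_by_finite_preBooleanAlgebras (φ : ModalFormula) :
    Derivable S42Ax φ ↔
      ∀ (W : Type) (R : W → W → Prop),
        IsPreBooleanAlgebraFrame W R → ValidOnFrame W R φ := by
  refine ⟨fun h W R hF => .of_derivable hF.2.1 hF.2.2.1
    (fun _ u v _ _ => hF.directed u v) h, fun hvalid => by_contra fun hφ => ?_⟩
  obtain ⟨Γ₀, hneg, hΓ₀⟩ := (consistent_neg_of_not_derivable hφ).exists_maximalConsistent_superset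
  obtain ⟨t, ht⟩ := Filtration.exists_isTop hΓ₀ (finite_subformulas φ)
  have := Filtration.finite (Γ₀ := Γ₀) (finite_subformulas φ)
  let root : Filtration (subformulas φ) Γ₀ := .of hΓ₀ hΓ₀.canonicalRel_refl
  have hvalidFiltration := ValidOnFrame.of_isBot_of_isTop (Filtration.isBot_of hΓ₀) ht hvalid
  have hφroot : φ ∈ root.1 :=
    (Filtration.truth_iff_mem hΓ₀ subset_rfl root).1 (hvalidFiltration _ root)
  exact hΓ₀.neg_mem_iff.1 (hneg rfl) hφroot.1
end

section
/- Every modal formula that is valid on every finite topless pre-Boolean algebra frame is also valid on every finite pre-Boolean algebra frame. (That is, the theory S4.tBA, defined as the set of modal formulas valid on all finite topless pre-Boolean algebra frames, is contained in the set of modal formulas valid on all finite pre-Boolean algebra frames.) -/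
/-- A finite topless pre-Boolean algebra frame: a finite set `W` with a
reflexive transitive relation `R` such that for some finite nonempty set `A`
there is a map `f` from `W` onto the collection of proper subsets of `A`
with `R w v ↔ f w ⊆ f v`. -/
def IsToplessPreBooleanAlgebraFrame (W : Type) (R : W → W → Prop) : Prop :=
  Finite W ∧ (∀ w, R w w) ∧ (∀ w v u, R w v → R v u → R w u) ∧
    ∃ (A : Type) (_ : Finite A) (_ : Nonempty A) (f : W → Set A),
      (∀ w, f w ≠ Set.univ) ∧ (∀ s : Set A, s ≠ Set.univ → ∃ w, f w = s) ∧
      ∀ w v, R w v ↔ f w ⊆ f v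

/-- Truth transfer along a bounded morphism (p-morphism). -/
lemma pmorphism_truth (M' M : KripkeModel) (g : M'.W → M.W)
    (hfor : ∀ u u', M'.R u u' → M.R (g u) (g u'))
    (hback : ∀ u v, M.R (g u) v → ∃ u', M'.R u u' ∧ g u' = v)
    (hval : ∀ u n, M'.V u n ↔ M.V (g u) n) :
    ∀ (φ : ModalFormula) (u : M'.W), M'.truth u φ ↔ M.truth (g u) φ := by
  intro φ
  induction φ with
  | falsum => intro u; exact Iff.rfl
  | var n => intro u; exact hval u n
  | impl φ ψ ihφ ihψ =>
      intro u
      simp only [KripkeModel.truth]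
      exact imp_congr (ihφ u) (ihψ u)
  | box φ ih =>
      intro u
      simp only [KripkeModel.truth]
      constructor
      · intro ht v hv
        obtain ⟨u', hu', rfl⟩ := hback u v hv
        exact (ih u').mp (ht u' hu')
      · intro ht u' hu'
        exact (ih u').mpr (ht (g u') (hfor u u' hu'))

/-- Every modal formula valid on all finite topless pre-Boolean algebra frames
is valid on all finite pre-Boolean algebra frames; i.e., S4.tBA is contained in
the logic of finite pre-Boolean algebra frames. -/
theorem S4tBA_subset_logic_of_preBooleanAlgebras (φ : ModalFormula)
    (h : ∀ (W : Type) (R : W → W → Prop),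
      IsToplessPreBooleanAlgebraFrame W R → ValidOnFrame W R φ) :
    ∀ (W : Type) (R : W → W → Prop),
      IsPreBooleanAlgebraFrame W R → ValidOnFrame W R φ := by
  rintro W R ⟨hfin, hrefl, htrans, A, hA, f, hf, hR⟩ V₀ w
  classical
  -- enlarged atom set
  let A' := A ⊕ Unit
  -- projection from subsets of A' to subsets of A: star forces the full set
  let π : Set A' → Set A := fun S => {a | Sum.inl a ∈ S ∨ Sum.inr () ∈ S}
  have πmono : ∀ {S T : Set A'}, S ⊆ T → π S ⊆ π T := by
    intro S T hST a ha
    cases ha with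
    | inl h => exact Or.inl (hST h)
    | inr h => exact Or.inr (hST h)
  have πstar : ∀ {S : Set A'}, Sum.inr () ∈ S → π S = Set.univ := by
    intro S hS
    ext a; simp only [Set.mem_univ, iff_true]
    exact Or.inr hS
  have πinl : ∀ (V : Set A), π (Sum.inl '' V) = V := by
    intro V
    ext a
    constructor
    · rintro (h | h)
      · obtain ⟨b, hb, hba⟩ := h
        cases Sum.inl.injEq .. ▸ hba
        exact Sum.inl_injective hba ▸ hb
      · obtain ⟨b, _, hba⟩ := h
        exact absurd hba (by simp)
    · intro ha
      exact Or.inl ⟨a, ha, rfl⟩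
  -- the topless frame
  let W' := {p : Set A' × W // p.1 ≠ Set.univ ∧ f p.2 = π p.1}
  let R' : W' → W' → Prop := fun p q => p.1.1 ⊆ q.1.1
  have hframe : IsToplessPreBooleanAlgebraFrame W' R' := by
    refine ⟨inferInstance, fun p => subset_rfl, fun p q r h1 h2 => h1.trans h2,
      A', inferInstance, ⟨Sum.inr ()⟩, fun p => p.1.1, fun p => p.2.1, ?_, ?_⟩
    · intro S hS
      obtain ⟨v, hv⟩ := hf (π S)
      exact ⟨⟨(S, v), hS, hv⟩, rfl⟩
    · intro p q; exact Iff.rfl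
  -- models
  let M : KripkeModel := ⟨W, R, V₀⟩
  let M' : KripkeModel := ⟨W', R', fun p n => V₀ p.1.2 n⟩
  let g : M'.W → M.W := fun p => p.1.2
  have hfor : ∀ u u', M'.R u u' → M.R (g u) (g u') := by
    intro u u' huu'
    exact (hR _ _).mpr (u.2.2 ▸ u'.2.2 ▸ πmono huu')
  have hback : ∀ u v, M.R (g u) v → ∃ u', M'.R u u' ∧ g u' = v := by
    intro u v huv
    have hsub : π u.1.1 ⊆ f v := u.2.2 ▸ (hR _ _).mp huv
    by_cases hstar : Sum.inr () ∈ u.1.1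
    · -- star present: f v = univ, stay at the same set
      have hfv : f v = Set.univ := Set.eq_univ_of_univ_subset (πstar hstar ▸ hsub)
      refine ⟨⟨(u.1.1, v), u.2.1, ?_⟩, subset_rfl, rfl⟩
      rw [hfv, πstar hstar]
    · -- no star: move to inl '' (f v)
      refine ⟨⟨(Sum.inl '' (f v), v), ?_, (πinl (f v)).symm⟩, ?_, rfl⟩
      · intro hc
        obtain ⟨b, _, hb⟩ := Set.eq_univ_iff_forall.mp hc (Sum.inr ())
        exact absurd hb (by simp)
      · intro x hx
        cases x with
        | inl a =>
            have : a ∈ π u.1.1 := Or.inl hx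
            exact ⟨a, hsub this, rfl⟩
        | inr s => cases s; exact absurd hx hstar
  have htr := pmorphism_truth M' M g hfor hback (fun u n => Iff.rfl)
  -- starting world
  have hstart : f w = π (Sum.inl '' (f w)) := (πinl (f w)).symm
  have hproper : (Sum.inl '' (f w) : Set A') ≠ Set.univ := by
    intro hc
    obtain ⟨b, _, hb⟩ := Set.eq_univ_iff_forall.mp hc (Sum.inr ())
    exact absurd hb (by simp)
  have hvalid := h W' R' hframe (fun p n => V₀ p.1.2 n) ⟨(Sum.inl '' (f w), w), hproper, hstart⟩
  exact (htr φ _).mp hvalid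
end

section
/- For a propositional variable p, the formula Diamond Box p -> Box Diamond p (axiom .2) is valid on every finite pre-Boolean algebra frame, but it is not valid on every finite topless pre-Boolean algebra frame: there exist a Kripke model whose frame is a finite topless pre-Boolean algebra and a world of that model at which Diamond Box p -> Box Diamond p is false. Consequently the set of modal formulas valid on all finite topless pre-Boolean algebra frames is strictly contained in the set of modal formulas valid on all finite pre-Boolean algebra frames. -/
namespace Dot2Aux

/-- The bounded-morphism map: a proper subset `s` of `Option A` is sent to
`univ` if `none ∈ s` or `s` contains all `some`-points, and otherwise to its
`A`-part. -/
def gmap (A : Type) (s : Set (Option A)) : Set A :=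
  {a | (none ∈ s ∨ ∀ b : A, some b ∈ s) ∨ some a ∈ s}

lemma gmap_mono {A : Type} {s t : Set (Option A)} (h : s ⊆ t) : gmap A s ⊆ gmap A t := by
  intro a ha
  rcases ha with (hn | hall) | hs
  · exact Or.inl (Or.inl (h hn))
  · exact Or.inl (Or.inr fun b => h (hall b))
  · exact Or.inr (h hs)

lemma some_image_ne_univ {A : Type} (t : Set A) :
    (Option.some '' t) ≠ (Set.univ : Set (Option A)) := by
  intro h
  have : (none : Option A) ∈ Option.some '' t := h.symm ▸ Set.mem_univ _
  rcases this with ⟨b, _, hb⟩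
  exact Option.some_ne_none b hb

lemma gmap_image {A : Type} {t : Set A} (ht : t ≠ Set.univ) : gmap A (Option.some '' t) = t := by
  ext a
  constructor
  · rintro ((hn | hall) | hs)
    · rcases hn with ⟨b, _, hb⟩
      exact absurd hb (Option.some_ne_none b)
    · refine absurd (Set.eq_univ_of_forall fun b => ?_) ht
      rcases hall b with ⟨c, hc, hcb⟩
      obtain rfl : c = b := Option.some_injective A hcb
      exact hc
    · rcases hs with ⟨b, hb, hba⟩
      obtain rfl : b = a := Option.some_injective A hba
      exact hb
  · intro ha
    exact Or.inr ⟨a, ha, rfl⟩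

lemma gmap_surj {A : Type} (t : Set A) :
    ∃ s : Set (Option A), s ≠ Set.univ ∧ gmap A s = t := by
  by_cases ht : t = Set.univ
  · refine ⟨Option.some '' Set.univ, some_image_ne_univ _, ?_⟩
    rw [ht]
    exact Set.eq_univ_of_forall fun a => Or.inl (Or.inr fun b => ⟨b, trivial, rfl⟩)
  · exact ⟨Option.some '' t, some_image_ne_univ t, gmap_image ht⟩

lemma gmap_back {A : Type} {s : Set (Option A)} (hs : s ≠ Set.univ) {t : Set A}
    (h : gmap A s ⊆ t) :
    ∃ s' : Set (Option A), s ⊆ s' ∧ s' ≠ Set.univ ∧ gmap A s' = t := by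
  by_cases hc : (none ∈ s ∨ ∀ b : A, some b ∈ s)
  · have hgu : gmap A s = Set.univ := Set.eq_univ_of_forall fun a => Or.inl hc
    have htu : t = Set.univ := Set.univ_subset_iff.mp (hgu ▸ h)
    exact ⟨s, le_refl _, hs, by rw [hgu, htu]⟩
  · push_neg at hc
    obtain ⟨hn, b0, hb0⟩ := hc
    by_cases ht : t = Set.univ
    · refine ⟨insert none s, Set.subset_insert _ _, ?_, ?_⟩
      · intro hu
        have : some b0 ∈ insert none s := hu.symm ▸ Set.mem_univ _
        rcases this with h1 | h1
        · exact Option.some_ne_none b0 h1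
        · exact hb0 h1
      · rw [ht]
        exact Set.eq_univ_of_forall fun a => Or.inl (Or.inl (Set.mem_insert _ _))
    · refine ⟨Option.some '' t, ?_, some_image_ne_univ t, gmap_image ht⟩
      intro x hx
      match x with
      | none => exact absurd hx hn
      | some a => exact ⟨a, h (Or.inr hx), rfl⟩

/-- Truth transfer along the bounded morphism from the topless frame built
over `Option A` to a pre-Boolean algebra frame. -/
lemma truth_lift {W : Type} {R : W → W → Prop} (V : W → ℕ → Prop)
    {A : Type} (f : W → Set A)
    (hR : ∀ w v, R w v ↔ f w ⊆ f v) (φ : ModalFormula) :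
    ∀ u : {q : Set (Option A) × W // q.1 ≠ Set.univ ∧ f q.2 = gmap A q.1},
      KripkeModel.truth ⟨{q : Set (Option A) × W // q.1 ≠ Set.univ ∧ f q.2 = gmap A q.1},
          fun a b => a.1.1 ⊆ b.1.1, fun a n => V a.1.2 n⟩ u φ ↔
        KripkeModel.truth ⟨W, R, V⟩ u.1.2 φ := by
  induction φ with
  | falsum => intro u; exact Iff.rfl
  | var n => intro u; exact Iff.rfl
  | impl ψ χ ih1 ih2 =>
    intro u
    simp only [KripkeModel.truth]
    rw [ih1 u, ih2 u]
  | box ψ ih =>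
    intro u
    simp only [KripkeModel.truth]
    constructor
    · intro H v hv
      have hsub : gmap A u.1.1 ⊆ f v := by
        rw [← u.2.2]
        exact (hR _ _).mp hv
      obtain ⟨s', hss', hs'u, hgs'⟩ := gmap_back u.2.1 hsub
      exact (ih ⟨(s', v), hs'u, hgs'.symm⟩).mp (H ⟨(s', v), hs'u, hgs'.symm⟩ hss')
    · intro H q hq
      refine (ih q).mpr (H _ ?_)
      rw [hR, u.2.2, q.2.2]
      exact gmap_mono hq

end Dot2Aux

/-- Axiom .2 (for a propositional variable p) is valid on every finite
pre-Boolean algebra frame but fails in some Kripke model on a finite topless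
pre-Boolean algebra frame; consequently the logic of finite topless
pre-Boolean algebra frames is strictly contained in the logic of finite
pre-Boolean algebra frames. -/
theorem dot2_separates_topless_from_preBooleanAlgebras (p : ℕ) :
    (∀ (W : Type) (R : W → W → Prop), IsPreBooleanAlgebraFrame W R →
      ValidOnFrame W R
        (ModalFormula.impl (ModalFormula.dia (ModalFormula.box (ModalFormula.var p)))
          (ModalFormula.box (ModalFormula.dia (ModalFormula.var p))))) ∧
    (∃ (W : Type) (R : W → W → Prop) (V : W → ℕ → Prop) (w : W),
      IsToplessPreBooleanAlgebraFrame W R ∧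
      ¬ KripkeModel.truth ⟨W, R, V⟩ w
          (ModalFormula.impl (ModalFormula.dia (ModalFormula.box (ModalFormula.var p)))
            (ModalFormula.box (ModalFormula.dia (ModalFormula.var p))))) ∧
    {φ : ModalFormula | ∀ (W : Type) (R : W → W → Prop),
        IsToplessPreBooleanAlgebraFrame W R → ValidOnFrame W R φ} ⊂
      {φ : ModalFormula | ∀ (W : Type) (R : W → W → Prop),
        IsPreBooleanAlgebraFrame W R → ValidOnFrame W R φ} := by
  classical
  -- Part 1: .2 is valid on all pre-Boolean algebra frames (directedness).
  have part1 : ∀ (W : Type) (R : W → W → Prop), IsPreBooleanAlgebraFrame W R →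
      ValidOnFrame W R
        (ModalFormula.impl (ModalFormula.dia (ModalFormula.box (ModalFormula.var p)))
          (ModalFormula.box (ModalFormula.dia (ModalFormula.var p)))) := by
    rintro W R ⟨-, -, -, A, -, f, fsurj, hR⟩ V w
    simp only [ModalFormula.dia, ModalFormula.neg, KripkeModel.truth]
    intro h1 v hv hbox
    apply h1
    intro v' hv' hbox'
    obtain ⟨t, ht⟩ := fsurj (f v ∪ f v')
    have hvt : R v t := (hR v t).mpr (by rw [ht]; exact Set.subset_union_left)
    have hv't : R v' t := (hR v' t).mpr (by rw [ht]; exact Set.subset_union_right)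
    exact hbox t hvt (hbox' t hv't)
  -- Part 2: a countermodel on the topless frame of proper subsets of Bool.
  have part2 : ∃ (W : Type) (R : W → W → Prop) (V : W → ℕ → Prop) (w : W),
      IsToplessPreBooleanAlgebraFrame W R ∧
      ¬ KripkeModel.truth ⟨W, R, V⟩ w
          (ModalFormula.impl (ModalFormula.dia (ModalFormula.box (ModalFormula.var p)))
            (ModalFormula.box (ModalFormula.dia (ModalFormula.var p)))) := by
    have hne0 : (∅ : Set Bool) ≠ Set.univ := by
      intro h
      exact absurd (h.symm ▸ Set.mem_univ true) (Set.notMem_empty true)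
    have hnef : ({false} : Set Bool) ≠ Set.univ := by
      intro h
      have : true ∈ ({false} : Set Bool) := h.symm ▸ Set.mem_univ true
      simp at this
    have hnet : ({true} : Set Bool) ≠ Set.univ := by
      intro h
      have : false ∈ ({true} : Set Bool) := h.symm ▸ Set.mem_univ false
      simp at this
    refine ⟨{s : Set Bool // s ≠ Set.univ}, fun s t => s.1 ⊆ t.1,
      fun s _ => s.1 = {false}, ⟨∅, hne0⟩, ⟨?_, ?_⟩⟩
    · exact ⟨inferInstance, fun _ => subset_rfl, fun _ _ _ h1 h2 => h1.trans h2,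
        Bool, inferInstance, ⟨true⟩, Subtype.val, fun s => s.2,
        fun s hs => ⟨⟨s, hs⟩, rfl⟩, fun _ _ => Iff.rfl⟩
    · simp only [ModalFormula.dia, ModalFormula.neg, KripkeModel.truth]
      intro h
      refine h ?_ ⟨{true}, hnet⟩ (Set.empty_subset _) ?_
      · -- diamond box p holds at ∅ : world {false} is a dead-end with p
        intro hall
        refine hall ⟨{false}, hnef⟩ (Set.empty_subset _) ?_
        intro u hu
        -- hu : {false} ⊆ u.1 ; show u.1 = {false}
        have hf : false ∈ u.1 := hu rfl
        have ht : true ∉ u.1 := by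
          intro htu
          apply u.2
          apply Set.eq_univ_of_forall
          intro b
          cases b
          · exact hf
          · exact htu
        ext b
        cases b
        · simpa using hf
        · simp [ht]
      · -- at world {true}, p holds nowhere accessible
        intro u hu hufalse
        have : true ∈ u.1 := hu rfl
        rw [hufalse] at this
        simp at this
  refine ⟨part1, part2, ?_⟩
  rw [Set.ssubset_def]
  constructor
  · -- inclusion: validity on topless frames implies validity on pre-BA frames
    rintro φ hφ W R ⟨hfin, hrefl, htrans, A, hfinA, f, fsurj, hR⟩ V w
    haveI : Finite W := hfin
    haveI : Finite A := hfinA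
    haveI := Fintype.ofFinite A
    haveI : Finite (Option A) := inferInstance
    have topless : IsToplessPreBooleanAlgebraFrame
        {q : Set (Option A) × W // q.1 ≠ Set.univ ∧ f q.2 = Dot2Aux.gmap A q.1}
        (fun a b => a.1.1 ⊆ b.1.1) := by
      refine ⟨inferInstance, fun _ => subset_rfl, fun _ _ _ h1 h2 => h1.trans h2,
        Option A, inferInstance, ⟨none⟩, fun q => q.1.1, fun q => q.2.1, ?_, fun _ _ => Iff.rfl⟩
      intro s hs
      obtain ⟨v, hv⟩ := fsurj (Dot2Aux.gmap A s)
      exact ⟨⟨(s, v), hs, hv⟩, rfl⟩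
    obtain ⟨s, hs, hgs⟩ := Dot2Aux.gmap_surj (A := A) (f w)
    have := hφ _ _ topless (fun a n => V a.1.2 n) ⟨(s, w), hs, hgs.symm⟩
    exact (Dot2Aux.truth_lift V f hR φ ⟨(s, w), hs, hgs.symm⟩).mp this
  · -- strictness: .2 is in the pre-BA logic but not in the topless logic
    intro hsub
    obtain ⟨W, R, V, w, htl, hfail⟩ := part2
    exact hfail (hsub (part1) W R htl V w)
end

section
/- For propositional variables p1, p2, p3, the formula Theta := (Diamond Box p1 and Diamond Box p2 and Diamond Box p3 and not Diamond[(p1 and p2) or (p1 and p3) or (p2 and p3)]) -> Diamond[Diamond Box p1 and Diamond Box p2 and not Diamond Box p3] is valid on every finite topless pre-Boolean algebra frame. -/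
/-- The formula Θ := (◇□p₁ ∧ ◇□p₂ ∧ ◇□p₃ ∧ ¬◇[(p₁∧p₂) ∨ (p₁∧p₃) ∨ (p₂∧p₃)])
    → ◇[◇□p₁ ∧ ◇□p₂ ∧ ¬◇□p₃]. -/
def theta (p1 p2 p3 : ℕ) : ModalFormula :=
  ModalFormula.impl
    (ModalFormula.conj
      (ModalFormula.conj
        (ModalFormula.conj
          (ModalFormula.dia (ModalFormula.box (ModalFormula.var p1)))
          (ModalFormula.dia (ModalFormula.box (ModalFormula.var p2))))
        (ModalFormula.dia (ModalFormula.box (ModalFormula.var p3))))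
      (ModalFormula.neg (ModalFormula.dia
        (ModalFormula.disj
          (ModalFormula.disj
            (ModalFormula.conj (ModalFormula.var p1) (ModalFormula.var p2))
            (ModalFormula.conj (ModalFormula.var p1) (ModalFormula.var p3)))
          (ModalFormula.conj (ModalFormula.var p2) (ModalFormula.var p3))))))
    (ModalFormula.dia
      (ModalFormula.conj
        (ModalFormula.conj
          (ModalFormula.dia (ModalFormula.box (ModalFormula.var p1)))
          (ModalFormula.dia (ModalFormula.box (ModalFormula.var p2))))
        (ModalFormula.neg (ModalFormula.dia (ModalFormula.box (ModalFormula.var p3))))))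


lemma truth_conj (M : KripkeModel) (w : M.W) (φ ψ : ModalFormula) :
    M.truth w (φ.conj ψ) ↔ M.truth w φ ∧ M.truth w ψ := by
  simp only [ModalFormula.conj, ModalFormula.neg, KripkeModel.truth]; tauto

lemma truth_disj (M : KripkeModel) (w : M.W) (φ ψ : ModalFormula) :
    M.truth w (φ.disj ψ) ↔ M.truth w φ ∨ M.truth w ψ := by
  simp only [ModalFormula.disj, ModalFormula.neg, KripkeModel.truth]; tauto

lemma truth_dia (M : KripkeModel) (w : M.W) (φ : ModalFormula) :
    M.truth w φ.dia ↔ ∃ v, M.R w v ∧ M.truth v φ := by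
  simp only [ModalFormula.dia, ModalFormula.neg, KripkeModel.truth]
  constructor
  · intro h; by_contra h'; push_neg at h'
    exact h fun v hv ht => h' v hv ht
  · rintro ⟨v, hv, ht⟩ h; exact h v hv ht

/-- The formula Θ is valid on every finite topless pre-Boolean algebra frame. -/
theorem theta_valid_on_topless_preBooleanAlgebras (p1 p2 p3 : ℕ) :
    ∀ (W : Type) (R : W → W → Prop),
      IsToplessPreBooleanAlgebraFrame W R → ValidOnFrame W R (theta p1 p2 p3) := by
  rintro W R ⟨hfin, hrefl, htrans, A, _, _, f, hproper, hsurj, hR⟩ V w0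
  set M : KripkeModel := ⟨W, R, V⟩ with hM
  intro h
  rw [truth_conj, truth_conj, truth_conj, truth_dia, truth_dia, truth_dia] at h
  obtain ⟨⟨⟨⟨v1, hv1, hb1⟩, ⟨v2, hv2, hb2⟩⟩, ⟨v3, hv3, hb3⟩⟩, hno⟩ := h
  -- hno : truth w0 (neg (dia ...))
  have hno' : ∀ x : W, R w0 x → ¬ (V x p1 ∧ V x p3) ∧ ¬ (V x p2 ∧ V x p3) := by
    intro x hx
    constructor
    · rintro ⟨h1, h3⟩
      apply hno
      rw [truth_dia]
      refine ⟨x, hx, ?_⟩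
      rw [truth_disj, truth_disj]
      left; right
      rw [truth_conj]
      exact ⟨h1, h3⟩
    · rintro ⟨h2, h3⟩
      apply hno
      rw [truth_dia]
      refine ⟨x, hx, ?_⟩
      rw [truth_disj]
      right
      rw [truth_conj]
      exact ⟨h2, h3⟩
  -- pick u with f u = f v1 ∩ f v2
  have hne : f v1 ∩ f v2 ≠ Set.univ := by
    intro h
    exact hproper v1 (Set.eq_univ_of_univ_subset (h ▸ Set.inter_subset_left))
  obtain ⟨u, hu⟩ := hsurj _ hne
  have hwu : R w0 u :=
    (hR w0 u).2 (hu ▸ Set.subset_inter ((hR _ _).1 hv1) ((hR _ _).1 hv2))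
  rw [truth_dia]
  refine ⟨u, hwu, ?_⟩
  rw [truth_conj, truth_conj, truth_dia, truth_dia]
  refine ⟨⟨⟨v1, ?_, hb1⟩, ⟨v2, ?_, hb2⟩⟩, ?_⟩
  · exact (hR u v1).2 (hu ▸ Set.inter_subset_left)
  · exact (hR u v2).2 (hu ▸ Set.inter_subset_right)
  · -- ¬ ◇□p3 at u
    intro hd
    rw [ModalFormula.dia] at hd
    have hd' : ∃ t, R u t ∧ ∀ x, R t x → V x p3 := by
      by_contra h'
      push_neg at h'
      apply hd
      intro t ht hb
      obtain ⟨x, hx, hnx⟩ := h' t ht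
      exact hnx (hb x hx)
    obtain ⟨t, hut, hb3'⟩ := hd'
    -- f t ⊇ f v1ᶜ and f t ⊇ f v2ᶜ, plus f t ⊇ f v1 ∩ f v2, so f t = univ
    have hsup : f v1 ∩ f v2 ⊆ f t := hu ▸ (hR _ _).1 hut
    have key : ∀ (vi : W), R w0 vi → (∀ x, R vi x → V x p1 ∨ V x p2) →
        f t ∪ f vi = Set.univ := by
      intro vi hwvi hbvi
      by_contra hne'
      obtain ⟨x, hx⟩ := hsurj _ hne'
      have hvx : R vi x := (hR vi x).2 (hx ▸ Set.subset_union_right)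
      have htx : R t x := (hR t x).2 (hx ▸ Set.subset_union_left)
      have hwx : R w0 x := htrans _ _ _ (htrans _ _ _ hwu hut) htx
      have h3 : V x p3 := hb3' x htx
      rcases hbvi x hvx with h1 | h2
      · exact (hno' x hwx).1 ⟨h1, h3⟩
      · exact (hno' x hwx).2 ⟨h2, h3⟩
    have k1 := key v1 hv1 (fun x hx => Or.inl (hb1 x hx))
    have k2 := key v2 hv2 (fun x hx => Or.inr (hb2 x hx))
    apply hproper t
    apply Set.eq_univ_of_forall
    intro a
    by_cases h1 : a ∈ f v1
    · by_cases h2 : a ∈ f v2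
      · exact hsup ⟨h1, h2⟩
      · have : a ∈ f t ∪ f v2 := k2 ▸ Set.mem_univ a
        rcases this with h | h
        · exact h
        · exact absurd h h2
    · have : a ∈ f t ∪ f v1 := k1 ▸ Set.mem_univ a
      rcases this with h | h
      · exact h
      · exact absurd h h1
end

section
/- Let M be a Kripke model whose accessibility relation R is transitive, let v be a world of M, let Lambda and A be sets of modal formulas, and let Lambda* be the smallest set of modal formulas containing Lambda together with A and closed under modus ponens (if phi and phi -> psi are in the set then so is psi) and necessitation (if phi is in the set then so is Box phi). If every formula of Lambda is true at every world of M, and for each formula alpha in A the formula Box alpha is true at v, then for every world w with R v w, every formula of Lambda* is true at w. -/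
/-- The smallest set of modal formulas containing `S` and closed under modus
ponens and necessitation. -/
inductive Closure (S : Set ModalFormula) : ModalFormula → Prop
  | base (φ : ModalFormula) : φ ∈ S → Closure S φ
  | mp (φ ψ : ModalFormula) :
      Closure S (ModalFormula.impl φ ψ) → Closure S φ → Closure S ψ
  | nec (φ : ModalFormula) : Closure S φ → Closure S (ModalFormula.box φ)

/-- If `M` is a transitive Kripke model, every formula of `Λ` is true at every
world, and `□α` is true at `v` for every `α ∈ A`, then every formula in the
closure `Λ*` of `Λ ∪ A` under modus ponens and necessitation is true at every
world accessible from `v`. -/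
theorem closure_true_at_accessible_worlds (M : KripkeModel)
    (hTrans : ∀ x y z : M.W, M.R x y → M.R y z → M.R x z)
    (v : M.W) (Λ A : Set ModalFormula)
    (h1 : ∀ φ ∈ Λ, ∀ w : M.W, M.truth w φ)
    (h2 : ∀ α ∈ A, M.truth v (ModalFormula.box α)) :
    ∀ w : M.W, M.R v w → ∀ φ : ModalFormula, Closure (Λ ∪ A) φ → M.truth w φ := by
  intro w hw φ hφ
  induction hφ generalizing w with
  | base φ h =>
    rcases h with h | h
    · exact h1 φ h w
    · exact h2 φ h w hw
  | mp φ ψ _ _ ih1 ih2 => exact ih1 w hw (ih2 w hw)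
  | nec φ _ ih => exact fun u hu => ih u (hTrans v w u hw hu)
end

section
/- Let M be a Kripke model whose frame is a finite pre-Boolean algebra, and let w0 be an initial world of M (that is, R w0 u holds for every world u of M). Then there exist a Kripke model M+ whose frame is a finite topless pre-Boolean algebra and an initial world w0+ of M+ such that for every modal formula phi, phi is true at w0 in M if and only if phi is true at w0+ in M+. -/
/-!
Adjoin a new point `none` to the base set `A` and collapse a subset `s` of `Option A` to
`A` if `none ∈ s`, and to `some ⁻¹' s` otherwise. On the proper subsets of `Option A`,
ordered by inclusion, this collapse is a surjective bounded morphism onto `Set A`. Pairing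
each proper subset `s` with the worlds `w` labelled `f w = collapse s` therefore gives a
topless pre-Boolean algebra model with a bounded morphism onto the given model, and bounded
morphisms preserve the truth of modal formulas.
-/

namespace KripkeModel

structure IsBoundedMorphism (M N : KripkeModel) (g : M.W → N.W) : Prop where
  val_iff : ∀ x n, M.V x n ↔ N.V (g x) n
  forth : ∀ x y, M.R x y → N.R (g x) (g y)
  back : ∀ x v, N.R (g x) v → ∃ y, M.R x y ∧ g y = v

theorem IsBoundedMorphism.truth_iff {M N : KripkeModel} {g : M.W → N.W}
    (hg : IsBoundedMorphism M N g) (φ : ModalFormula) (x : M.W) :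
    M.truth x φ ↔ N.truth (g x) φ := by
  induction φ generalizing x with
  | falsum => exact Iff.rfl
  | var n => exact hg.val_iff x n
  | impl φ ψ ihφ ihψ => exact Iff.imp (ihφ x) (ihψ x)
  | box φ ih =>
    constructor
    · intro h v hv
      obtain ⟨y, hxy, rfl⟩ := hg.back x v hv
      exact (ih y).mp (h y hxy)
    · exact fun h y hxy => (ih y).mpr (h (g y) (hg.forth x y hxy))

end KripkeModel

namespace Set

variable {A : Type}

def collapseNone (s : Set (Option A)) : Set A :=
  {a | none ∈ s ∨ some a ∈ s}

theorem collapseNone_mono : Monotone (collapseNone (A := A)) :=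
  fun _ _ hst _ ha => ha.imp (@hst _) (@hst _)

@[simp]
theorem collapseNone_empty : collapseNone (∅ : Set (Option A)) = ∅ := by
  simp [collapseNone]

theorem collapseNone_image_some (v : Set A) : collapseNone (some '' v) = v := by
  ext a
  simp [collapseNone]

theorem collapseNone_of_none_mem {s : Set (Option A)} (h : none ∈ s) :
    collapseNone s = univ :=
  eq_univ_of_forall fun _ => Or.inl h

theorem exists_ne_univ_superset_collapseNone_eq {s : Set (Option A)} (hs : s ≠ univ)
    {v : Set A} (hv : collapseNone s ⊆ v) :
    ∃ t, t ≠ univ ∧ s ⊆ t ∧ collapseNone t = v := by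
  by_cases hvu : v = univ
  · subst hvu
    by_cases hsu : collapseNone s = univ
    · exact ⟨s, hs, subset_rfl, hsu⟩
    -- Some `some a` is missing from `s`, so `insert none s` is still proper.
    obtain ⟨a, ha⟩ := (ne_univ_iff_exists_notMem _).mp hsu
    refine ⟨insert none s, ?_, subset_insert _ _, collapseNone_of_none_mem (mem_insert _ _)⟩
    refine (ne_univ_iff_exists_notMem _).mpr ⟨some a, fun h => ha (Or.inr ?_)⟩
    exact (mem_insert_iff.mp h).resolve_left (Option.some_ne_none a)
  · have hnone : none ∉ s := fun h =>
      hvu (univ_subset_iff.mp (collapseNone_of_none_mem h ▸ hv))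
    refine ⟨some '' v, ?_, ?_, collapseNone_image_some v⟩
    · exact (ne_univ_iff_exists_notMem _).mpr ⟨none, by simp⟩
    · rintro (_ | a) ha
      · exact absurd ha hnone
      · exact mem_image_of_mem _ (hv (Or.inr ha))

end Set

section ToplessCover

open Set KripkeModel

variable {W A : Type} (f : W → Set A)

def ToplessCover : Type :=
  {p : Set (Option A) × W // p.1 ≠ univ ∧ collapseNone p.1 = f p.2}

def toplessCoverModel (V : W → ℕ → Prop) : KripkeModel where
  W := ToplessCover f
  R x y := x.1.1 ⊆ y.1.1
  V x := V x.1.2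

theorem isBoundedMorphism_toplessCover {R : W → W → Prop} (hfR : ∀ w v, R w v ↔ f w ⊆ f v)
    (V : W → ℕ → Prop) :
    IsBoundedMorphism (toplessCoverModel f V) ⟨W, R, V⟩ (fun x => x.1.2) where
  val_iff _ _ := Iff.rfl
  forth x y hxy := by
    change R x.1.2 y.1.2
    rw [hfR, ← x.2.2, ← y.2.2]
    exact collapseNone_mono hxy
  back x v hxv := by
    change R x.1.2 v at hxv
    rw [hfR, ← x.2.2] at hxv
    obtain ⟨t, ht, hst, htv⟩ := exists_ne_univ_superset_collapseNone_eq x.2.1 hxv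
    exact ⟨⟨(t, v), ht, htv⟩, hst, rfl⟩

theorem isToplessPreBooleanAlgebraFrame_toplessCover [Finite W] [Finite A]
    (hf : Function.Surjective f) :
    IsToplessPreBooleanAlgebraFrame (ToplessCover f) (fun x y => x.1.1 ⊆ y.1.1) := by
  refine ⟨Subtype.finite, fun _ => subset_rfl, fun _ _ _ => Subset.trans,
    Option A, inferInstance, ⟨none⟩, fun x => x.1.1, fun x => x.2.1, ?_, fun _ _ => Iff.rfl⟩
  intro s hs
  obtain ⟨w, hw⟩ := hf (collapseNone s)
  exact ⟨⟨(s, w), hs, hw.symm⟩, rfl⟩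

end ToplessCover

theorem eq_empty_of_forall_rel_of_surjective {W A : Type} {R : W → W → Prop} {f : W → Set A}
    (hf : Function.Surjective f) (hfR : ∀ w v, R w v ↔ f w ⊆ f v) {w0 : W}
    (h0 : ∀ u, R w0 u) : f w0 = ∅ := by
  obtain ⟨u, hu⟩ := hf ∅
  exact Set.subset_empty_iff.mp (hu ▸ (hfR w0 u).mp (h0 u))

/-- Every Kripke model on a finite pre-Boolean algebra frame with an initial
world is equivalent, with respect to all modal formulas, to a Kripke model on
a finite topless pre-Boolean algebra frame at an initial world. -/
theorem preBooleanAlgebra_model_equivalent_to_topless (W : Type)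
    (R : W → W → Prop) (V : W → ℕ → Prop)
    (hBA : IsPreBooleanAlgebraFrame W R) (w0 : W) (h0 : ∀ u : W, R w0 u) :
    ∃ (W' : Type) (R' : W' → W' → Prop) (V' : W' → ℕ → Prop) (w0' : W'),
      IsToplessPreBooleanAlgebraFrame W' R' ∧ (∀ u : W', R' w0' u) ∧
      ∀ φ : ModalFormula,
        KripkeModel.truth ⟨W, R, V⟩ w0 φ ↔ KripkeModel.truth ⟨W', R', V'⟩ w0' φ := by
  obtain ⟨_, -, -, A, _, f, hf, hfR⟩ := hBA
  have hw0 : Set.collapseNone ∅ = f w0 := by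
    rw [Set.collapseNone_empty, eq_empty_of_forall_rel_of_surjective hf hfR h0]
  let M := toplessCoverModel f V
  let x0 : M.W := ⟨(∅, w0), Set.empty_ne_univ, hw0⟩
  refine ⟨M.W, M.R, M.V, x0, isToplessPreBooleanAlgebraFrame_toplessCover f hf,
    fun u => Set.empty_subset u.1.1, fun φ => ?_⟩
  exact ((isBoundedMorphism_toplessCover f hfR V).truth_iff φ x0).symm
end
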